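/- arXiv:1810.13070 — 4 statements merged into one kernel-verified Lean document; each statement's English description precedes it below -/
import Mathlib

section
/- Let n ≥ 1 be a natural number, let y be a nonzero real number and x a real number, and let g be the 2×2 real matrix with rows (y, x) and (0, 1). Then there exist matrices k₁, k₂ in SO(2) (real 2×2 matrices k with kᵀk = 1 and det k = 1) and nonzero real numbers d₁, d₂ with n⁻¹ ≤ |d₁/d₂| ≤ n such that g = k₁ · diag(d₁, d₂) · k₂, if and only if x²/|y| + |y| + |y|⁻¹ ≤ n + n⁻¹. -/
/-!
The determinant and `tr (g gᵀ)` are invariant under multiplication by rotations on either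
side, so any decomposition `g = k₁ diag(d₁, d₂) k₂` of `g = [[y, x], [0, 1]]` has `d₁ d₂ = y` and
`d₁² + d₂² = x² + y² + 1`. Hence `t = |d₁ / d₂|` satisfies `t + t⁻¹ = (x² + y² + 1) / |y|`, and
for `n ≥ 1` the bound `t + t⁻¹ ≤ n + n⁻¹` is equivalent to `n⁻¹ ≤ t ≤ n`. Since every real
`2 × 2` matrix is of the form `R(θ₁) diag(d₁, d₂) R(θ₂)` with rotations `R(θ)`, the condition is
also sufficient.
-/

open Matrix

noncomputable def rotationMatrix (θ : ℝ) : Matrix (Fin 2) (Fin 2) ℝ :=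
  !![Real.cos θ, -Real.sin θ; Real.sin θ, Real.cos θ]

theorem transpose_rotationMatrix (θ : ℝ) : (rotationMatrix θ)ᵀ = rotationMatrix (-θ) := by
  rw [rotationMatrix, rotationMatrix, Real.cos_neg, Real.sin_neg, neg_neg]
  ext i j
  fin_cases i <;> fin_cases j <;> rfl

theorem rotationMatrix_transpose_mul_self (θ : ℝ) :
    (rotationMatrix θ)ᵀ * rotationMatrix θ = 1 := by
  rw [transpose_rotationMatrix, rotationMatrix, rotationMatrix, mul_fin_two, one_fin_two,
    Real.cos_neg, Real.sin_neg]
  congrm !![?_, ?_; ?_, ?_]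
  · linear_combination Real.cos_sq_add_sin_sq θ
  · ring
  · ring
  · linear_combination Real.sin_sq_add_cos_sq θ

theorem det_rotationMatrix (θ : ℝ) : (rotationMatrix θ).det = 1 := by
  rw [rotationMatrix, det_fin_two_of]
  linear_combination Real.cos_sq_add_sin_sq θ

/-- Write `g = [[p, -q], [q, p]] + [[r, s], [s, -r]]` with `p + q i = ‖z‖ e^{iα}` and
`r + s i = ‖w‖ e^{iβ}`; then `g = R(θ₁) diag(‖z‖ + ‖w‖, ‖z‖ - ‖w‖) R(θ₂)` as soon as
`θ₁ + θ₂ = α` and `θ₁ - θ₂ = β`. -/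
theorem exists_eq_rotationMatrix_mul_diagonal_mul_rotationMatrix
    (g : Matrix (Fin 2) (Fin 2) ℝ) :
    ∃ θ₁ θ₂ d₁ d₂ : ℝ, g = rotationMatrix θ₁ * diagonal ![d₁, d₂] * rotationMatrix θ₂ := by
  let z : ℂ := ⟨(g 0 0 + g 1 1) / 2, (g 1 0 - g 0 1) / 2⟩
  let w : ℂ := ⟨(g 0 0 - g 1 1) / 2, (g 0 1 + g 1 0) / 2⟩
  set θ₁ := (z.arg + w.arg) / 2
  set θ₂ := (z.arg - w.arg) / 2
  have hz : z.arg = θ₁ + θ₂ := by ring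
  have hw : w.arg = θ₁ - θ₂ := by ring
  have hzre : ‖z‖ * Real.cos (θ₁ + θ₂) = (g 0 0 + g 1 1) / 2 := hz ▸ Complex.norm_mul_cos_arg z
  have hzim : ‖z‖ * Real.sin (θ₁ + θ₂) = (g 1 0 - g 0 1) / 2 := hz ▸ Complex.norm_mul_sin_arg z
  have hwre : ‖w‖ * Real.cos (θ₁ - θ₂) = (g 0 0 - g 1 1) / 2 := hw ▸ Complex.norm_mul_cos_arg w
  have hwim : ‖w‖ * Real.sin (θ₁ - θ₂) = (g 0 1 + g 1 0) / 2 := hw ▸ Complex.norm_mul_sin_arg w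
  rw [Real.cos_add] at hzre
  rw [Real.sin_add] at hzim
  rw [Real.cos_sub] at hwre
  rw [Real.sin_sub] at hwim
  refine ⟨θ₁, θ₂, ‖z‖ + ‖w‖, ‖z‖ - ‖w‖, ?_⟩
  rw [eta_fin_two g, rotationMatrix, rotationMatrix, diagonal_fin_two, cons_val_zero, cons_val_one,
    cons_val_zero, mul_fin_two, mul_fin_two]
  congrm !![?_, ?_; ?_, ?_]
  · linear_combination -hzre - hwre
  · linear_combination hzim - hwim
  · linear_combination -hzim - hwim
  · linear_combination -hzre + hwre

section Orthogonal

variable {n R : Type*} [Fintype n] [DecidableEq n] [CommRing R]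

theorem trace_mul_transpose_orthogonal_mul_mul {k₁ k₂ : Matrix n n R} (hk₁ : k₁ᵀ * k₁ = 1)
    (hk₂ : k₂ᵀ * k₂ = 1) (A : Matrix n n R) :
    trace (k₁ * A * k₂ * (k₁ * A * k₂)ᵀ) = trace (A * Aᵀ) := by
  have hk₂' : k₂ * k₂ᵀ = 1 := mul_eq_one_comm.mp hk₂
  calc trace (k₁ * A * k₂ * (k₁ * A * k₂)ᵀ)
      = trace (k₁ * (A * (k₂ * k₂ᵀ) * Aᵀ) * k₁ᵀ) := by
        simp only [transpose_mul, Matrix.mul_assoc]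
    _ = trace (k₁ᵀ * k₁ * (A * Aᵀ)) := by
        rw [trace_mul_comm, hk₂', Matrix.mul_one, Matrix.mul_assoc]
    _ = trace (A * Aᵀ) := by rw [hk₁, Matrix.one_mul]

theorem mul_eq_det_and_sq_add_sq_eq_trace {g k₁ k₂ : Matrix (Fin 2) (Fin 2) R} {d₁ d₂ : R}
    (hk₁ : k₁ᵀ * k₁ = 1) (hk₁det : k₁.det = 1) (hk₂ : k₂ᵀ * k₂ = 1) (hk₂det : k₂.det = 1)
    (hg : g = k₁ * diagonal ![d₁, d₂] * k₂) :
    d₁ * d₂ = g.det ∧ d₁ ^ 2 + d₂ ^ 2 = trace (g * gᵀ) := by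
  subst hg
  refine ⟨by simp [hk₁det, hk₂det], ?_⟩
  rw [trace_mul_transpose_orthogonal_mul_mul hk₁ hk₂, diagonal_transpose,
    diagonal_mul_diagonal, trace_diagonal, Fin.sum_univ_two]
  simp [sq]

end Orthogonal

theorem add_inv_le_add_inv_iff {a t : ℝ} (ha : 1 ≤ a) (ht : 0 < t) :
    t + t⁻¹ ≤ a + a⁻¹ ↔ a⁻¹ ≤ t ∧ t ≤ a := by
  have ha₀ : 0 < a := by linarith
  have hat : 0 < a * t := mul_pos ha₀ ht
  have key : t + t⁻¹ - (a + a⁻¹) = (t - a) * (a * t - 1) / (a * t) := by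
    field_simp
    ring
  rw [← sub_nonpos, key, div_le_iff₀ hat, zero_mul, mul_nonpos_iff, inv_le_iff_one_le_mul₀ ha₀]
  constructor
  · rintro (⟨h₁, h₂⟩ | ⟨h₁, h₂⟩) <;> constructor <;> nlinarith
  · rintro ⟨h₁, h₂⟩
    right
    constructor <;> linarith

theorem abs_div_add_inv_eq {d₁ d₂ : ℝ} (hd₁ : d₁ ≠ 0) (hd₂ : d₂ ≠ 0) :
    |d₁ / d₂| + |d₁ / d₂|⁻¹ = (d₁ ^ 2 + d₂ ^ 2) / |d₁ * d₂| := by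
  rw [abs_div, abs_mul, ← sq_abs d₁, ← sq_abs d₂, inv_div]
  field_simp

theorem inv_le_abs_div_and_abs_div_le_iff {a d₁ d₂ : ℝ} (ha : 1 ≤ a) (hd₁ : d₁ ≠ 0)
    (hd₂ : d₂ ≠ 0) :
    a⁻¹ ≤ |d₁ / d₂| ∧ |d₁ / d₂| ≤ a ↔ (d₁ ^ 2 + d₂ ^ 2) / |d₁ * d₂| ≤ a + a⁻¹ := by
  rw [← abs_div_add_inv_eq hd₁ hd₂, add_inv_le_add_inv_iff ha (abs_pos.2 (div_ne_zero hd₁ hd₂))]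

theorem inv_le_abs_div_and_abs_div_le_iff_of_eq_mul_diagonal_mul
    {g k₁ k₂ : Matrix (Fin 2) (Fin 2) ℝ} {a d₁ d₂ : ℝ} (ha : 1 ≤ a) (hg₀ : g.det ≠ 0)
    (hk₁ : k₁ᵀ * k₁ = 1) (hk₁det : k₁.det = 1) (hk₂ : k₂ᵀ * k₂ = 1) (hk₂det : k₂.det = 1)
    (hg : g = k₁ * diagonal ![d₁, d₂] * k₂) :
    d₁ ≠ 0 ∧ d₂ ≠ 0 ∧
      (a⁻¹ ≤ |d₁ / d₂| ∧ |d₁ / d₂| ≤ a ↔ trace (g * gᵀ) / |g.det| ≤ a + a⁻¹) := by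
  obtain ⟨hprod, hsum⟩ := mul_eq_det_and_sq_add_sq_eq_trace hk₁ hk₁det hk₂ hk₂det hg
  obtain ⟨hd₁, hd₂⟩ := mul_ne_zero_iff.1 (hprod ▸ hg₀)
  rw [← hprod, ← hsum]
  exact ⟨hd₁, hd₂, inv_le_abs_div_and_abs_div_le_iff ha hd₁ hd₂⟩

theorem singular_value_support_condition (n : ℕ) (hn : 1 ≤ n) (x : ℝ) (y : ℝ) (hy : y ≠ 0) :
    (∃ (k₁ k₂ : Matrix (Fin 2) (Fin 2) ℝ) (d₁ d₂ : ℝ),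
      k₁ᵀ * k₁ = 1 ∧ k₁.det = 1 ∧ k₂ᵀ * k₂ = 1 ∧ k₂.det = 1 ∧
      d₁ ≠ 0 ∧ d₂ ≠ 0 ∧ ((n : ℝ))⁻¹ ≤ |d₁ / d₂| ∧ |d₁ / d₂| ≤ (n : ℝ) ∧
      !![y, x; 0, 1] = k₁ * Matrix.diagonal ![d₁, d₂] * k₂) ↔
    x ^ 2 / |y| + |y| + |y|⁻¹ ≤ (n : ℝ) + ((n : ℝ))⁻¹ := by
  have hn₁ : (1 : ℝ) ≤ n := by exact_mod_cast hn
  set g : Matrix (Fin 2) (Fin 2) ℝ := !![y, x; 0, 1]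
  have hdet : g.det = y := by simp [g, det_fin_two_of]
  have htrace : trace (g * gᵀ) = x ^ 2 + y ^ 2 + 1 := by
    rw [trace_fin_two]
    simp [g, mul_apply, sq, add_comm]
  have hlhs : x ^ 2 / |y| + |y| + |y|⁻¹ = trace (g * gᵀ) / |g.det| := by
    rw [htrace, hdet, ← sq_abs y]
    field_simp
  rw [hlhs]
  constructor
  · rintro ⟨k₁, k₂, d₁, d₂, hk₁, hk₁det, hk₂, hk₂det, -, -, hlo, hhi, hg⟩
    exact (inv_le_abs_div_and_abs_div_le_iff_of_eq_mul_diagonal_mul hn₁ (hdet ▸ hy)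
      hk₁ hk₁det hk₂ hk₂det hg).2.2.1 ⟨hlo, hhi⟩
  · intro h
    obtain ⟨θ₁, θ₂, d₁, d₂, hg⟩ := exists_eq_rotationMatrix_mul_diagonal_mul_rotationMatrix g
    obtain ⟨hd₁, hd₂, hbounds⟩ := inv_le_abs_div_and_abs_div_le_iff_of_eq_mul_diagonal_mul hn₁
      (hdet ▸ hy) (rotationMatrix_transpose_mul_self θ₁) (det_rotationMatrix θ₁)
      (rotationMatrix_transpose_mul_self θ₂) (det_rotationMatrix θ₂) hg
    exact ⟨_, _, d₁, d₂, rotationMatrix_transpose_mul_self θ₁, det_rotationMatrix θ₁,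
      rotationMatrix_transpose_mul_self θ₂, det_rotationMatrix θ₂, hd₁, hd₂, (hbounds.2 h).1,
      (hbounds.2 h).2, hg⟩
end

section
/- Let (rₙ) be a sequence of positive real numbers with rₙ → ∞, let α, β > 0, let b > 0 be a real number, and let f be a complex-valued continuously differentiable function on the interval [0, b]. Then lim_{n→∞} ∫_0^b f(x) · sin(α rₙ x)/(β x) dx = (π/(2β)) · f(0). -/
/-!
Write `f x = f 0 + x • g x`; since `f` is Lipschitz on `[0, b]`, `g` is bounded, hence integrable.
The `f 0` part is the Dirichlet integral `∫₀^{cb} sin u / u du → π / 2`, evaluated through the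
Laplace transform `1 / x = ∫₀^∞ e^{-xt} dt` and Fubini. The `g` part is `∫₀^b sin (c x) g x dx`,
which tends to `0` by the Riemann–Lebesgue lemma.
-/

open MeasureTheory Filter Real Set Topology
open scoped FourierTransform NNReal

theorem integral_exp_neg_mul_Ioi {x : ℝ} (hx : 0 < x) : ∫ t in Ioi (0 : ℝ), exp (-x * t) = x⁻¹ := by
  simpa using integral_exp_mul_Ioi (neg_lt_zero.2 hx) 0

theorem integral_exp_neg_mul_mul_sin (t R : ℝ) :
    ∫ x in (0 : ℝ)..R, exp (-x * t) * sin x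
      = (1 - exp (-R * t) * (t * sin R + cos R)) / (1 + t ^ 2) := by
  have hderiv (x : ℝ) : HasDerivAt (fun x ↦ -(exp (-x * t) * (t * sin x + cos x)) / (1 + t ^ 2))
      (exp (-x * t) * sin x) x := by
    have hexp : HasDerivAt (fun x ↦ exp (-x * t)) (exp (-x * t) * (-t)) x := by
      simpa using ((hasDerivAt_neg x).mul_const t).exp
    refine (((hexp.mul (((hasDerivAt_sin x).const_mul t).add (hasDerivAt_cos x))).neg).div_const
      (1 + t ^ 2)).congr_deriv ?_
    simp only [Pi.add_apply]
    field_simp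
    ring
  rw [intervalIntegral.integral_eq_sub_of_hasDerivAt (fun x _ ↦ hderiv x)
    (Continuous.intervalIntegrable (by fun_prop) _ _)]
  simp only [neg_zero, zero_mul, exp_zero, sin_zero, mul_zero, cos_zero, zero_add, one_mul]
  ring

theorem integrable_exp_neg_mul_mul_sin_prod (R : ℝ) :
    Integrable (Function.uncurry fun x t ↦ exp (-x * t) * sin x)
      ((volume.restrict (Ioc 0 R)).prod (volume.restrict (Ioi 0))) := by
  have hmeas : AEStronglyMeasurable (Function.uncurry fun x t ↦ exp (-x * t) * sin x)
      ((volume.restrict (Ioc 0 R)).prod (volume.restrict (Ioi 0))) :=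
    Continuous.aestronglyMeasurable (by fun_prop)
  refine (integrable_prod_iff hmeas).2 ⟨?_, ?_⟩
  · filter_upwards [ae_restrict_mem measurableSet_Ioc] with x hx
    exact (exp_neg_integrableOn_Ioi 0 hx.1).mul_const (sin x)
  · refine Integrable.of_bound hmeas.norm.integral_prod_right' 1 ?_
    filter_upwards [ae_restrict_mem measurableSet_Ioc] with x hx
    simp only [Function.uncurry_apply_pair, norm_mul, norm_eq_abs, abs_exp, integral_mul_const,
      integral_exp_neg_mul_Ioi hx.1]
    rw [abs_abs, abs_inv, abs_of_pos hx.1, inv_mul_le_one₀ hx.1]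
    exact abs_sin_le_abs.trans_eq (abs_of_pos hx.1)

noncomputable def dirichletRemainder (R : ℝ) : ℝ :=
  ∫ t in Ioi (0 : ℝ), exp (-R * t) * (t * sin R + cos R) / (1 + t ^ 2)

theorem abs_exp_mul_sin_add_cos_div_le (R t : ℝ) :
    |exp (-R * t) * (t * sin R + cos R) / (1 + t ^ 2)| ≤ 2 * exp (-R * t) := by
  have h : |t * sin R + cos R| ≤ 2 * (1 + t ^ 2) := calc
    |t * sin R + cos R| ≤ |t| * 1 + 1 := by
      refine (abs_add_le _ _).trans ?_
      rw [abs_mul]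
      gcongr
      exacts [abs_sin_le_one R, abs_cos_le_one R]
    _ ≤ 2 * (1 + t ^ 2) := by nlinarith [sq_abs t, abs_nonneg t]
  rw [abs_div, abs_mul, abs_exp, abs_of_pos (by positivity : (0 : ℝ) < 1 + t ^ 2),
    div_le_iff₀ (by positivity)]
  nlinarith [mul_le_mul_of_nonneg_left h (exp_pos (-R * t)).le]

theorem integrableOn_exp_mul_sin_add_cos_div {R : ℝ} (hR : 0 < R) :
    IntegrableOn (fun t ↦ exp (-R * t) * (t * sin R + cos R) / (1 + t ^ 2)) (Ioi 0) :=
  Integrable.mono' ((exp_neg_integrableOn_Ioi 0 hR).const_mul 2)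
    (Measurable.aestronglyMeasurable (by fun_prop))
    (.of_forall fun t ↦ abs_exp_mul_sin_add_cos_div_le R t)

theorem integral_sin_div_eq_pi_div_two_sub {R : ℝ} (hR : 0 < R) :
    ∫ x in (0 : ℝ)..R, sin x / x = π / 2 - dirichletRemainder R := calc
  ∫ x in (0 : ℝ)..R, sin x / x
    = ∫ x in Ioc 0 R, ∫ t in Ioi 0, exp (-x * t) * sin x := by
      rw [intervalIntegral.integral_of_le hR.le]
      refine setIntegral_congr_fun measurableSet_Ioc fun x hx ↦ ?_
      rw [integral_mul_const, integral_exp_neg_mul_Ioi hx.1, inv_mul_eq_div]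
  _ = ∫ t in Ioi 0, ∫ x in Ioc 0 R, exp (-x * t) * sin x :=
      integral_integral_swap (integrable_exp_neg_mul_mul_sin_prod R)
  _ = ∫ t in Ioi 0, ((1 + t ^ 2)⁻¹ - exp (-R * t) * (t * sin R + cos R) / (1 + t ^ 2)) := by
      refine setIntegral_congr_fun measurableSet_Ioi fun t _ ↦ ?_
      rw [← intervalIntegral.integral_of_le hR.le, integral_exp_neg_mul_mul_sin, sub_div, one_div]
  _ = π / 2 - dirichletRemainder R := by
      rw [integral_sub integrable_inv_one_add_sq.integrableOn
        (integrableOn_exp_mul_sin_add_cos_div hR), integral_Ioi_inv_one_add_sq, arctan_zero,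
        sub_zero, dirichletRemainder]

theorem abs_dirichletRemainder_le {R : ℝ} (hR : 0 < R) : |dirichletRemainder R| ≤ 2 / R := calc
  |dirichletRemainder R| ≤ ∫ t in Ioi (0 : ℝ), 2 * exp (-R * t) := by
    rw [← norm_eq_abs]
    exact norm_integral_le_of_norm_le ((exp_neg_integrableOn_Ioi 0 hR).const_mul 2)
      (.of_forall fun t ↦ abs_exp_mul_sin_add_cos_div_le R t)
  _ = 2 / R := by rw [integral_const_mul, integral_exp_neg_mul_Ioi hR, div_eq_mul_inv]

theorem tendsto_integral_sin_div_atTop :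
    Tendsto (fun R ↦ ∫ x in (0 : ℝ)..R, sin x / x) atTop (𝓝 (π / 2)) := by
  have hrem : Tendsto dirichletRemainder atTop (𝓝 0) := by
    refine squeeze_zero_norm' ?_ (tendsto_const_nhds (x := (2 : ℝ)) |>.div_atTop tendsto_id)
    filter_upwards [eventually_gt_atTop 0] with R hR
    exact abs_dirichletRemainder_le hR
  simpa using (tendsto_const_nhds.sub hrem).congr'
    ((eventually_gt_atTop 0).mono fun R hR ↦ (integral_sin_div_eq_pi_div_two_sub hR).symm)

theorem integral_sin_mul_div (c b : ℝ) :
    ∫ x in (0 : ℝ)..b, sin (c * x) / x = ∫ x in (0 : ℝ)..c * b, sin x / x := by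
  rcases eq_or_ne c 0 with rfl | hc
  · simp
  have hscale := intervalIntegral.integral_comp_mul_left (fun u ↦ sin u / u) hc (a := 0) (b := b)
  rw [mul_zero] at hscale
  calc ∫ x in (0 : ℝ)..b, sin (c * x) / x = c * ∫ x in (0 : ℝ)..b, sin (c * x) / (c * x) := by
        rw [← intervalIntegral.integral_const_mul]
        congr 1 with x
        field_simp
    _ = ∫ x in (0 : ℝ)..c * b, sin x / x := by rw [hscale, smul_eq_mul, mul_inv_cancel_left₀ hc]

theorem intervalIntegrable_sin_mul_div (c a b : ℝ) :
    IntervalIntegrable (fun x ↦ sin (c * x) / x) volume a b := by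
  refine intervalIntegrable_iff.2 <| IntegrableOn.of_bound measure_Ioc_lt_top
    (Measurable.aestronglyMeasurable (by fun_prop)) |c| (.of_forall fun x ↦ ?_)
  rw [norm_div, norm_eq_abs, norm_eq_abs]
  rcases eq_or_ne x 0 with rfl | hx
  · simp
  rw [div_le_iff₀ (abs_pos.2 hx), ← abs_mul]
  exact abs_sin_le_abs

theorem tendsto_integral_sin_mul_div_atTop {b : ℝ} (hb : 0 < b) :
    Tendsto (fun c ↦ ∫ x in (0 : ℝ)..b, sin (c * x) / x) atTop (𝓝 (π / 2)) := by
  simp_rw [integral_sin_mul_div]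
  exact tendsto_integral_sin_div_atTop.comp (tendsto_id.atTop_mul_const hb)

-- Since `𝐞 y = exp (2π i y)`, the two characters on the right are `exp (∓ i c x)`.
theorem ofReal_sin_mul_eq_fourierChar_sub (c x : ℝ) :
    (sin (c * x) : ℂ) =
      Complex.I / 2 * (𝐞 (-(x * (c * (2 * π)⁻¹))) - 𝐞 (-(x * (c * -(2 * π)⁻¹)))) := by
  have hπ : (π : ℂ) ≠ 0 := by exact_mod_cast pi_ne_zero
  rw [Complex.ofReal_sin, Complex.sin, fourierChar_apply, fourierChar_apply]
  push_cast
  field_simp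

section

variable {E : Type*} [NormedAddCommGroup E] [NormedSpace ℂ E]

theorem tendsto_integral_sin_mul_smul_cocompact {G : ℝ → E} (hG : Integrable G) :
    Tendsto (fun c : ℝ ↦ ∫ x, sin (c * x) • G x) (cocompact ℝ) (𝓝 0) := by
  have hexp (w : ℝ) : Integrable fun x ↦ 𝐞 (-(x * w)) • G x := by
    simpa [mul_comm] using (Real.fourierIntegral_convergent_iff w).2 hG
  have hsin (c : ℝ) : ∫ x, sin (c * x) • G x = (Complex.I / 2) •
      ((∫ x, 𝐞 (-(x * (c * (2 * π)⁻¹))) • G x) - ∫ x, 𝐞 (-(x * (c * -(2 * π)⁻¹))) • G x) := by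
    rw [← integral_sub (hexp _) (hexp _), ← integral_smul]
    congr 1 with x
    rw [Circle.smul_def, Circle.smul_def, ← sub_smul, smul_smul,
      ← ofReal_sin_mul_eq_fourierChar_sub, Complex.coe_smul]
  have hF := Real.tendsto_integral_exp_smul_cocompact G
  have hπ : (2 * π)⁻¹ ≠ 0 := by positivity
  simpa [hsin] using ((hF.comp (tendsto_cocompact_mul_right₀ hπ)).sub
    (hF.comp (tendsto_cocompact_mul_right₀ (neg_ne_zero.2 hπ)))).const_smul (Complex.I / 2)

theorem tendsto_intervalIntegral_sin_mul_smul_cocompact {G : ℝ → E} {a b : ℝ}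
    (hG : IntervalIntegrable G volume a b) :
    Tendsto (fun c : ℝ ↦ ∫ x in a..b, sin (c * x) • G x) (cocompact ℝ) (𝓝 0) := by
  rw [tendsto_zero_iff_norm_tendsto_zero]
  simp_rw [intervalIntegral.norm_integral_eq_norm_integral_uIoc,
    ← integral_indicator measurableSet_uIoc, indicator_smul]
  simpa using (tendsto_integral_sin_mul_smul_cocompact
    ((intervalIntegrable_iff.1 hG).integrable_indicator measurableSet_uIoc)).norm

theorem LipschitzOnWith.intervalIntegrable_inv_smul_sub {f : ℝ → E} {K : ℝ≥0} {b : ℝ}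
    (hb : 0 ≤ b) (hf : LipschitzOnWith K f (Icc 0 b)) :
    IntervalIntegrable (fun x ↦ x⁻¹ • (f x - f 0)) volume 0 b := by
  have hcont : ContinuousOn (fun x ↦ x⁻¹ • (f x - f 0)) (Ioc 0 b) :=
    (continuousOn_inv₀.mono fun x hx ↦ hx.1.ne').smul
      ((hf.continuousOn.mono Ioc_subset_Icc_self).sub continuousOn_const)
  refine (intervalIntegrable_iff_integrableOn_Ioc_of_le hb).2 <|
    IntegrableOn.of_bound measure_Ioc_lt_top (hcont.aestronglyMeasurable measurableSet_Ioc) K ?_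
  filter_upwards [ae_restrict_mem measurableSet_Ioc] with x hx
  have hlip := hf.norm_sub_le (Ioc_subset_Icc_self hx) (left_mem_Icc.2 hb)
  rw [norm_smul, norm_inv, norm_eq_abs, abs_of_pos hx.1, inv_mul_le_iff₀ hx.1]
  simpa [abs_of_pos hx.1, mul_comm] using hlip

theorem LipschitzOnWith.tendsto_integral_sin_mul_div_smul [CompleteSpace E] {f : ℝ → E}
    {K : ℝ≥0} {b : ℝ} (hb : 0 < b) (hf : LipschitzOnWith K f (Icc 0 b)) :
    Tendsto (fun c ↦ ∫ x in (0 : ℝ)..b, (sin (c * x) / x) • f x) atTop (𝓝 ((π / 2) • f 0)) := by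
  have hg := hf.intervalIntegrable_inv_smul_sub hb.le
  have hsplit (c : ℝ) : ∫ x in (0 : ℝ)..b, (sin (c * x) / x) • f x =
      (∫ x in (0 : ℝ)..b, sin (c * x) / x) • f 0 +
        ∫ x in (0 : ℝ)..b, sin (c * x) • x⁻¹ • (f x - f 0) := by
    rw [← intervalIntegral.integral_smul_const, ← intervalIntegral.integral_add
      ((intervalIntegrable_sin_mul_div c 0 b).smul_continuousOn continuousOn_const)
      (hg.continuousOn_smul (f := fun x ↦ sin (c * x)) (by fun_prop))]
    congr 1 with x
    rw [smul_smul, ← div_eq_mul_inv, smul_sub, add_sub_cancel]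
  simp_rw [hsplit]
  simpa using ((tendsto_integral_sin_mul_div_atTop hb).smul_const (f 0)).add
    ((tendsto_intervalIntegral_sin_mul_smul_cocompact hg).mono_left atTop_le_cocompact)

end

theorem dirichlet_kernel_limit_at_zero_general
    (r : ℕ → ℝ) (hr' : Tendsto r atTop atTop)
    (α β : ℝ) (hα : 0 < α)
    (b : ℝ) (hb : 0 < b)
    (f : ℝ → ℂ) (hf : ContDiffOn ℝ 1 f (Set.Icc 0 b)) :
    Tendsto
      (fun n => ∫ x in (0:ℝ)..b, f x * ((Real.sin (α * r n * x) / (β * x) : ℝ) : ℂ))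
      atTop (nhds (((Real.pi / (2 * β) : ℝ) : ℂ) * f 0)) := by
  obtain ⟨K, hK⟩ := hf.exists_lipschitzOnWith one_ne_zero (convex_Icc 0 b) isCompact_Icc
  have hlim := ((hK.tendsto_integral_sin_mul_div_smul hb).comp
    (hr'.const_mul_atTop hα)).const_smul β⁻¹
  convert hlim using 1
  · ext n
    rw [Function.comp_apply, ← intervalIntegral.integral_smul]
    congr 1 with x
    rw [Complex.real_smul, Complex.real_smul, div_mul_eq_div_div_swap, div_eq_inv_mul _ β,
      Complex.ofReal_mul, mul_comm (f x), mul_assoc]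
  · rw [smul_smul, Complex.real_smul]
    congr 2
    push_cast
    ring

theorem dirichlet_kernel_limit_at_zero
    (r : ℕ → ℝ) (hr : ∀ n, 0 < r n) (hr' : Tendsto r atTop atTop)
    (α β : ℝ) (hα : 0 < α) (hβ : 0 < β)
    (b : ℝ) (hb : 0 < b)
    (f : ℝ → ℂ) (hf : ContDiffOn ℝ 1 f (Set.Icc 0 b)) :
    Tendsto
      (fun n => ∫ x in (0:ℝ)..b, f x * ((Real.sin (α * r n * x) / (β * x) : ℝ) : ℂ))
      atTop (nhds (((Real.pi / (2 * β) : ℝ) : ℂ) * f 0)) :=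
  dirichlet_kernel_limit_at_zero_general r hr' α β hα b hb f hf
end

section
/- For every natural number N and all complex numbers z, w with Re(z) > 0 and Re(w) > N, one has ∑_{j=0}^N binom(N, j) · Γ(z + j) · Γ(w − j) = Γ(z) · Γ(w − N) · Γ(z + w) / Γ(z + w − N). -/
/-!
Writing `B` for the Beta function, the right-hand side is `B(z, w - N) Γ(z + w)`. Pascal's rule
splits the sum for `N + 1` into the sums for `N` at `(z, w)` and at `(z + 1, w - 1)`; both leave
`z + w` unchanged, so the identity follows by induction on `N` from the Beta recurrence
`B(z, u) = B(z + 1, u) + B(z, u + 1)`, itself a consequence of `Γ(s + 1) = s Γ(s)`.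
-/

open Finset

namespace Complex

theorem betaIntegral_add_one_left_add_betaIntegral_add_one_right {z u : ℂ}
    (hz : 0 < z.re) (hu : 0 < u.re) :
    betaIntegral (z + 1) u + betaIntegral z (u + 1) = betaIntegral z u := by
  have hz1 : 0 < (z + 1).re := by simp only [add_re, one_re]; linarith
  have hu1 : 0 < (u + 1).re := by simp only [add_re, one_re]; linarith
  have hzu : 0 < (z + u).re := by simp only [add_re]; linarith
  have hne : Gamma (z + u + 1) ≠ 0 :=
    Gamma_ne_zero_of_re_pos (by simp only [add_re, one_re]; linarith)
  have hB := Gamma_mul_Gamma_eq_betaIntegral hz hu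
  have hBz := Gamma_mul_Gamma_eq_betaIntegral hz1 hu
  have hBu := Gamma_mul_Gamma_eq_betaIntegral hz hu1
  rw [Gamma_add_one z (ne_zero_of_re_pos hz), add_right_comm] at hBz
  rw [Gamma_add_one u (ne_zero_of_re_pos hu), ← add_assoc] at hBu
  apply mul_left_cancel₀ hne
  linear_combination (z + u) * hB - hBz - hBu -
    betaIntegral z u * Gamma_add_one (z + u) (ne_zero_of_re_pos hzu)

theorem sum_range_succ_choose_mul_Gamma_mul_Gamma (N : ℕ) (z w : ℂ) :
    ∑ j ∈ range (N + 2), ((N + 1).choose j : ℂ) * Gamma (z + j) * Gamma (w - j) =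
      ∑ j ∈ range (N + 1), (N.choose j : ℂ) * Gamma (z + j) * Gamma (w - j) +
      ∑ j ∈ range (N + 1), (N.choose j : ℂ) * Gamma (z + 1 + j) * Gamma (w - 1 - j) := by
  simpa only [Nat.cast_add, Nat.cast_one, mul_assoc, ← add_assoc, add_right_comm _ _ (1 : ℂ),
    sub_add_eq_sub_sub, sub_right_comm _ _ (1 : ℂ)] using
    sum_choose_succ_mul (fun j _ ↦ Gamma (z + j) * Gamma (w - j)) N

theorem sum_range_choose_mul_Gamma_mul_Gamma_eq_betaIntegral (N : ℕ) {z w : ℂ} (hz : 0 < z.re)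
    (hw : (N : ℝ) < w.re) :
    ∑ j ∈ range (N + 1), (N.choose j : ℂ) * Gamma (z + j) * Gamma (w - j) =
      betaIntegral z (w - N) * Gamma (z + w) := by
  induction N generalizing z w with
  | zero =>
    simpa [mul_comm] using Gamma_mul_Gamma_eq_betaIntegral hz (by simpa using hw)
  | succ N ih =>
    push_cast at hw
    have hu : 0 < (w - N - 1).re := by simp only [sub_re, one_re, natCast_re]; linarith
    rw [sum_range_succ_choose_mul_Gamma_mul_Gamma, ih hz (by linarith),
      ih (z := z + 1) (w := w - 1) (by simp only [add_re, one_re]; linarith)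
        (by simp only [sub_re, one_re]; linarith),
      add_add_sub_cancel, sub_right_comm, Nat.cast_succ, ← sub_sub,
      ← betaIntegral_add_one_left_add_betaIntegral_add_one_right hz hu, sub_add_cancel,
      add_comm, add_mul]

end Complex

theorem gamma_binomial_identity (N : ℕ) (z w : ℂ) (hz : 0 < z.re) (hw : (N : ℝ) < w.re) :
    ∑ j ∈ Finset.range (N + 1),
      (N.choose j : ℂ) * Complex.Gamma (z + j) * Complex.Gamma (w - j) =
    Complex.Gamma z * Complex.Gamma (w - N) * Complex.Gamma (z + w) /
      Complex.Gamma (z + w - N) := by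
  have hwN : 0 < (w - N).re := by simp only [Complex.sub_re, Complex.natCast_re]; linarith
  have hB := Complex.Gamma_mul_Gamma_eq_betaIntegral hz hwN
  rw [← add_sub_assoc] at hB
  have hzwN : 0 < (z + w - N).re := by
    simp only [Complex.sub_re, Complex.add_re, Complex.natCast_re] at hwN ⊢; linarith
  rw [Complex.sum_range_choose_mul_Gamma_mul_Gamma_eq_betaIntegral N hz hw,
    eq_div_iff (Complex.Gamma_ne_zero_of_re_pos hzwN), hB]
  ring
end

section
/- Let y be a nonzero real number, let a, b be nonnegative integers, let m ∈ {0, 1}, and let s₀ ∈ ℂ. Consider the integral ∫_{ℝ∖{0}} (t y)^a t^{−b} exp(−π(t² y² + t⁻²)) |t|^{2 s₀} sgn(t)^m d×t, where d×t = dt/|t|. If a + b + m is odd, the integral equals 0. If a + b + m is even, the integral equals 2 · y^a · |y|^{−s₀ − (a−b)/2} · K_{s₀ + (a−b)/2}(2π |y|), where the complex power |y|^{−s₀−(a−b)/2} of the positive real |y| is exp((−s₀−(a−b)/2)·log|y|). -/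
/-!
Under `t ↦ -t` the integrand picks up the factor `(-1) ^ (a + b + m)`, so the integral vanishes
in the odd case and is twice the integral over `t > 0` in the even case. For `t > 0` the
integrand is `y ^ a * t ^ (2 * s - 1) * exp (-π (t² |y|² + t⁻²))` with `s = s₀ + (a - b) / 2`,
and the substitution `u = |y| t²` identifies the integral of `t ^ (2 * s - 1) * exp (…)` over
`t > 0` with `|y| ^ (-s) * K_s(2π |y|)`.
-/

open MeasureTheory

/-- The modified Bessel function of the second kind,
`K_s(x) = (1/2) ∫₀^∞ exp(-(x/2)(t + t⁻¹)) t^(s-1) dt`. -/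
noncomputable def besselK (s : ℂ) (x : ℝ) : ℂ :=
  (1 / 2) * ∫ t in Set.Ioi (0 : ℝ),
    (↑(Real.exp (-(x / 2) * (t + t⁻¹))) : ℂ) * (t : ℂ) ^ (s - 1)

open Set

section Parity

variable {E : Type*} [NormedAddCommGroup E] [NormedSpace ℝ E] {f : ℝ → E}

theorem integral_eq_zero_of_odd (hf : ∀ t, f (-t) = -f t) : ∫ t, f t = 0 := by
  have h := integral_neg_eq_self f volume
  simp only [hf, integral_neg] at h
  have h₂ : (2 : ℝ) • ∫ t, f t = 0 := by
    rw [two_smul]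
    nth_rewrite 1 [← h]
    exact neg_add_cancel _
  exact (smul_eq_zero.mp h₂).resolve_left two_ne_zero

theorem integral_eq_two_nsmul_integral_Ioi_of_even (hf : ∀ t, f (-t) = f t) :
    ∫ t, f t = 2 • ∫ t in Ioi 0, f t := by
  by_cases hf₀ : IntegrableOn f (Ioi 0)
  · have hIic : IntegrableOn f (Iic 0) := by
      have hIci : IntegrableOn f (Ici (-0)) := by
        rw [neg_zero]
        exact Iff.mpr integrableOn_Ici_iff_integrableOn_Ioi hf₀
      simpa only [hf] using hIci.comp_neg_Iic
    rw [← setIntegral_univ, ← Iic_union_Ioi (a := 0),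
      setIntegral_union (Iic_disjoint_Ioi le_rfl) measurableSet_Ioi hIic hf₀, two_nsmul,
      ← neg_zero, ← integral_comp_neg_Ioi, neg_zero]
    simp only [hf]
  · rw [integral_undef hf₀, integral_undef fun h ↦ hf₀ h.integrableOn, smul_zero]

end Parity

open Complex

theorem integral_Ioi_cpow_mul_exp_eq_besselK {c : ℝ} (hc : 0 < c) (s : ℂ) :
    ∫ x in Ioi (0 : ℝ), (x : ℂ) ^ (2 * s - 1) *
        (↑(Real.exp (-(Real.pi * (x ^ 2 * c ^ 2 + (x⁻¹) ^ 2)))) : ℂ) =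
      (c : ℂ) ^ (-s) * besselK s (2 * Real.pi * c) := by
  set g : ℝ → ℂ := fun u ↦
    (↑(Real.exp (-(2 * Real.pi * c / 2) * (u + u⁻¹))) : ℂ) * (u : ℂ) ^ (s - 1)
  have hK : besselK s (2 * Real.pi * c) = 1 / 2 * ∫ u in Ioi 0, g u := rfl
  -- `u = c * x ^ 2`, in two steps `u = c * v` and `v = x ^ 2`
  have hsub : ∫ u in Ioi 0, g u =
      ∫ x in Ioi 0, c • (|(2 : ℝ)| * x ^ ((2 : ℝ) - 1)) • g (c * x ^ (2 : ℝ)) := by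
    rw [integral_smul, integral_comp_rpow_Ioi (fun x ↦ g (c * x)) two_ne_zero,
      integral_comp_mul_left_Ioi' g 0 hc, mul_zero]
  have hpt : ∀ x ∈ Ioi (0 : ℝ), c • (|(2 : ℝ)| * x ^ ((2 : ℝ) - 1)) • g (c * x ^ (2 : ℝ)) =
      2 * (c : ℂ) ^ s * ((x : ℂ) ^ (2 * s - 1) *
        (↑(Real.exp (-(Real.pi * (x ^ 2 * c ^ 2 + (x⁻¹) ^ 2)))) : ℂ)) := by
    intro x hx
    have hx' : (x : ℂ) ≠ 0 := ofReal_ne_zero.mpr hx.ne'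
    have hc' : (c : ℂ) ≠ 0 := ofReal_ne_zero.mpr hc.ne'
    have hexp : -(2 * Real.pi * c / 2) * (c * x ^ 2 + (c * x ^ 2)⁻¹) =
        -(Real.pi * (x ^ 2 * c ^ 2 + (x⁻¹) ^ 2)) := by
      field_simp
    simp only [g, Real.rpow_two, hexp]
    rw [ofReal_mul, mul_cpow_ofReal_nonneg hc.le (sq_nonneg x), ← Real.rpow_two,
      ← cpow_mul_ofReal_nonneg hx.le, cpow_sub _ _ hx', cpow_sub _ _ hc', ofReal_ofNat,
      mul_sub, cpow_sub _ _ hx', cpow_ofNat_mul, mul_one, cpow_one, cpow_one, cpow_two]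
    simp only [real_smul, abs_two, show (2 : ℝ) - 1 = 1 by norm_num, Real.rpow_one]
    push_cast
    field_simp
  have hcs : (c : ℂ) ^ s ≠ 0 := by simp [hc.ne']
  rw [hK, hsub, setIntegral_congr_fun measurableSet_Ioi hpt, integral_const_mul, cpow_neg]
  generalize (∫ x in Ioi (0 : ℝ), _ : ℂ) = I
  field_simp

noncomputable def besselMellinIntegrand (y : ℝ) (a b m : ℕ) (s₀ : ℂ) (t : ℝ) : ℂ :=
  (((t * y : ℝ) : ℂ) ^ a * ((t : ℂ)⁻¹) ^ b *
    (↑(Real.exp (-(Real.pi * (t ^ 2 * y ^ 2 + (t⁻¹) ^ 2)))) : ℂ) *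
    (↑|t| : ℂ) ^ (2 * s₀) * (↑(Real.sign t) : ℂ) ^ m) / (↑|t| : ℂ)

section besselMellinIntegrand

variable (y : ℝ) (a b m : ℕ) (s₀ : ℂ) {t : ℝ}

theorem besselMellinIntegrand_neg (t : ℝ) :
    besselMellinIntegrand y a b m s₀ (-t) =
      (-1) ^ (a + b + m) * besselMellinIntegrand y a b m s₀ t := by
  simp only [besselMellinIntegrand, abs_neg, Real.sign_neg, neg_mul, inv_neg, neg_sq,
    ofReal_neg]
  rw [neg_pow, neg_pow, neg_pow, pow_add, pow_add]
  ring

theorem besselMellinIntegrand_of_pos (ht : 0 < t) :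
    besselMellinIntegrand y a b m s₀ t =
      (y : ℂ) ^ a * ((t : ℂ) ^ (2 * (s₀ + ((a : ℂ) - (b : ℂ)) / 2) - 1) *
        (↑(Real.exp (-(Real.pi * (t ^ 2 * y ^ 2 + (t⁻¹) ^ 2)))) : ℂ)) := by
  have ht' : (t : ℂ) ≠ 0 := ofReal_ne_zero.mpr ht.ne'
  rw [besselMellinIntegrand, abs_of_pos ht, Real.sign_of_pos ht,
    show 2 * (s₀ + ((a : ℂ) - (b : ℂ)) / 2) - 1 = 2 * s₀ + a - b - 1 by ring,
    cpow_sub _ _ ht', cpow_sub _ _ ht', cpow_add _ _ ht', cpow_natCast, cpow_natCast, cpow_one]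
  push_cast
  simp only [one_pow, mul_pow, inv_pow]
  field_simp

end besselMellinIntegrand

theorem mellin_type_integral_besselK_general (y : ℝ) (hy : y ≠ 0) (a b m : ℕ)
    (s₀ : ℂ) :
    (Odd (a + b + m) →
      (∫ t : ℝ, (((t * y : ℝ) : ℂ) ^ a * ((t : ℂ)⁻¹) ^ b *
          (↑(Real.exp (-(Real.pi * (t ^ 2 * y ^ 2 + (t⁻¹) ^ 2)))) : ℂ) *
          (↑|t| : ℂ) ^ (2 * s₀) * (↑(Real.sign t) : ℂ) ^ m) / (↑|t| : ℂ)) = 0) ∧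
    (Even (a + b + m) →
      (∫ t : ℝ, (((t * y : ℝ) : ℂ) ^ a * ((t : ℂ)⁻¹) ^ b *
          (↑(Real.exp (-(Real.pi * (t ^ 2 * y ^ 2 + (t⁻¹) ^ 2)))) : ℂ) *
          (↑|t| : ℂ) ^ (2 * s₀) * (↑(Real.sign t) : ℂ) ^ m) / (↑|t| : ℂ)) =
      2 * (y : ℂ) ^ a * (↑|y| : ℂ) ^ (-s₀ - ((a : ℂ) - (b : ℂ)) / 2) *
        besselK (s₀ + ((a : ℂ) - (b : ℂ)) / 2) (2 * Real.pi * |y|)) := by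
  change (_ → ∫ t, besselMellinIntegrand y a b m s₀ t = 0) ∧
    (_ → ∫ t, besselMellinIntegrand y a b m s₀ t = _)
  have hneg := besselMellinIntegrand_neg y a b m s₀
  refine ⟨fun hodd ↦ integral_eq_zero_of_odd fun t ↦ by
    rw [hneg, hodd.neg_one_pow, neg_one_mul], fun heven ↦ ?_⟩
  have hpos := fun t (ht : t ∈ Ioi (0 : ℝ)) ↦ besselMellinIntegrand_of_pos y a b m s₀ ht
  rw [← sq_abs y] at hpos
  rw [integral_eq_two_nsmul_integral_Ioi_of_even fun t ↦ by rw [hneg, heven.neg_one_pow, one_mul],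
    setIntegral_congr_fun measurableSet_Ioi hpos, integral_const_mul,
    integral_Ioi_cpow_mul_exp_eq_besselK (abs_pos.mpr hy), nsmul_eq_mul, neg_add']
  push_cast
  ring

theorem mellin_type_integral_besselK (y : ℝ) (hy : y ≠ 0) (a b m : ℕ) (hm : m ≤ 1)
    (s₀ : ℂ) :
    (Odd (a + b + m) →
      (∫ t : ℝ, (((t * y : ℝ) : ℂ) ^ a * ((t : ℂ)⁻¹) ^ b *
          (↑(Real.exp (-(Real.pi * (t ^ 2 * y ^ 2 + (t⁻¹) ^ 2)))) : ℂ) *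
          (↑|t| : ℂ) ^ (2 * s₀) * (↑(Real.sign t) : ℂ) ^ m) / (↑|t| : ℂ)) = 0) ∧
    (Even (a + b + m) →
      (∫ t : ℝ, (((t * y : ℝ) : ℂ) ^ a * ((t : ℂ)⁻¹) ^ b *
          (↑(Real.exp (-(Real.pi * (t ^ 2 * y ^ 2 + (t⁻¹) ^ 2)))) : ℂ) *
          (↑|t| : ℂ) ^ (2 * s₀) * (↑(Real.sign t) : ℂ) ^ m) / (↑|t| : ℂ)) =
      2 * (y : ℂ) ^ a * (↑|y| : ℂ) ^ (-s₀ - ((a : ℂ) - (b : ℂ)) / 2) *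
        besselK (s₀ + ((a : ℂ) - (b : ℂ)) / 2) (2 * Real.pi * |y|)) :=
  mellin_type_integral_besselK_general y hy a b m s₀
end
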